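/- For every k ∈ ℕ, p ≥ 1, β > 0, σ ∈ (1/2,1) and fields h ∈ ℝ^p, the quenched free energies of the hierarchical Hopfield model satisfy f_k(β,h,σ,p) ≤ f_{k+1}(β,h,σ,p) ≤ f_k(β,h,σ,p) + (βp/2)·2^{(k+1)(1−2σ)}. -/
import Mathlib


open Real Filter

/-- The ±1 value of a Boolean spin. -/
noncomputable def spin (b : Bool) : ℝ := if b then 1 else -1

/-- Embedding of the first half of the sites. -/
def finLeft {k : ℕ} (i : Fin (2 ^ k)) : Fin (2 ^ (k + 1)) :=
  ⟨i.1, lt_of_lt_of_le i.2 (Nat.pow_le_pow_right (by norm_num) (Nat.le_succ k))⟩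

/-- Embedding of the second half of the sites. -/
def finRight {k : ℕ} (i : Fin (2 ^ k)) : Fin (2 ^ (k + 1)) :=
  ⟨i.1 + 2 ^ k, by
    have h2 : 2 ^ (k + 1) = 2 ^ k + 2 ^ k := by rw [pow_succ]; ring
    have := i.2; omega⟩

lemma two_pow_succ' (k : ℕ) : 2 ^ (k+1) = 2 ^ k + 2 ^ k := by rw [pow_succ]; ring

def halfEquiv (k : ℕ) : Fin (2 ^ k) ⊕ Fin (2 ^ k) ≃ Fin (2 ^ (k + 1)) where
  toFun := Sum.elim finLeft finRight
  invFun j := if hj : (j : ℕ) < 2 ^ k then Sum.inl ⟨j, hj⟩ else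
    Sum.inr ⟨(j : ℕ) - 2 ^ k, by have := j.2; have := two_pow_succ' k; omega⟩
  left_inv := by
    rintro (i | i)
    · simp [finLeft, i.2]
    · have : ¬ ((i : ℕ) + 2 ^ k < 2 ^ k) := by omega
      simp [finRight, this]
  right_inv := by
    intro j
    by_cases hj : (j : ℕ) < 2 ^ k
    · simp [hj, finLeft]
    · have h2 := j.2
      have h3 := two_pow_succ' k
      simp only [hj, dite_false, Sum.elim_inr, finRight]
      exact Fin.ext (by simp; omega)

lemma sum_split {k : ℕ} (f : Fin (2 ^ (k+1)) → ℝ) :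
    ∑ j, f j = ∑ i : Fin (2^k), f (finLeft i) + ∑ i : Fin (2^k), f (finRight i) := by
  rw [← (halfEquiv k).sum_comp f, Fintype.sum_sum_type]
  rfl

def pairEquiv (k : ℕ) : (Fin (2^(k+1)) → Bool) ≃ (Fin (2^k) → Bool) × (Fin (2^k) → Bool) where
  toFun S := (fun i => S (finLeft i), fun i => S (finRight i))
  invFun P j := Sum.elim P.1 P.2 ((halfEquiv k).symm j)
  left_inv S := by
    funext j
    have key : ∀ x, Sum.elim (fun i => S (finLeft i)) (fun i => S (finRight i)) x
        = S (halfEquiv k x) := by rintro (i|i) <;> rfl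
    show Sum.elim (fun i => S (finLeft i)) (fun i => S (finRight i)) ((halfEquiv k).symm j) = S j
    rw [key, Equiv.apply_symm_apply]
  right_inv P := by
    apply Prod.ext
    · funext i
      show Sum.elim P.1 P.2 ((halfEquiv k).symm ((halfEquiv k) (Sum.inl i))) = _
      rw [Equiv.symm_apply_apply]; rfl
    · funext i
      show Sum.elim P.1 P.2 ((halfEquiv k).symm ((halfEquiv k) (Sum.inr i))) = _
      rw [Equiv.symm_apply_apply]; rfl

def xiEquiv (p k : ℕ) : (Fin p → Fin (2^(k+1)) → Bool) ≃
    (Fin p → Fin (2^k) → Bool) × (Fin p → Fin (2^k) → Bool) :=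
  (Equiv.arrowCongr (Equiv.refl (Fin p)) (pairEquiv k)).trans
    (Equiv.arrowProdEquivProdArrow _ _ _)

lemma xiEquiv_apply (p k : ℕ) (ξ : Fin p → Fin (2^(k+1)) → Bool) :
    xiEquiv p k ξ = (fun μ i => ξ μ (finLeft i), fun μ i => ξ μ (finRight i)) := rfl

/-- The hierarchical Hopfield model Hamiltonian, defined recursively; `p` is the number
of patterns, `ξ` the pattern assignment, and the double sum over sites includes `i = j`. -/
noncomputable def hopH (σ : ℝ) (p : ℕ) :
    (k : ℕ) → (Fin (2 ^ k) → Bool) → (Fin p → Fin (2 ^ k) → Bool) → ℝ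
  | 0, _, _ => 0
  | (k + 1), S, ξ =>
      hopH σ p k (fun i => S (finLeft i)) (fun μ i => ξ μ (finLeft i)) +
        hopH σ p k (fun i => S (finRight i)) (fun μ i => ξ μ (finRight i)) -
        1 / (2 * (2 : ℝ) ^ (2 * σ * ((k : ℝ) + 1))) *
          ∑ μ : Fin p, ∑ i : Fin (2 ^ (k + 1)), ∑ j : Fin (2 ^ (k + 1)),
            spin (ξ μ i) * spin (ξ μ j) * spin (S i) * spin (S j)

/-- The quenched free energy of the hierarchical Hopfield model with external fields `h`:
the uniform average over the `2^(p·2^k)` pattern assignments of the log partition function,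
divided by the number `2^k` of spins. -/
noncomputable def hopF (β σ : ℝ) (p : ℕ) (h : Fin p → ℝ) (k : ℕ) : ℝ :=
  ((2 : ℝ) ^ k)⁻¹ * (((2 : ℝ) ^ (p * 2 ^ k))⁻¹ *
    ∑ ξ : Fin p → Fin (2 ^ k) → Bool,
      Real.log (∑ S : Fin (2 ^ k) → Bool,
        Real.exp (-β * hopH σ p k S ξ + β * ∑ μ, h μ * ∑ i, spin (ξ μ i) * spin (S i))))

noncomputable def Zk (β σ : ℝ) (p : ℕ) (h : Fin p → ℝ) (k : ℕ)
    (ξ : Fin p → Fin (2 ^ k) → Bool) : ℝ :=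
  ∑ S : Fin (2 ^ k) → Bool,
    Real.exp (-β * hopH σ p k S ξ + β * ∑ μ, h μ * ∑ i, spin (ξ μ i) * spin (S i))

lemma hopF_eq (β σ : ℝ) (p : ℕ) (h : Fin p → ℝ) (k : ℕ) :
    hopF β σ p h k = ((2 : ℝ) ^ k)⁻¹ * (((2 : ℝ) ^ (p * 2 ^ k))⁻¹ *
      ∑ ξ : Fin p → Fin (2 ^ k) → Bool, Real.log (Zk β σ p h k ξ)) := rfl

lemma Zk_pos (β σ : ℝ) (p : ℕ) (h : Fin p → ℝ) (k : ℕ)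
    (ξ : Fin p → Fin (2 ^ k) → Bool) : 0 < Zk β σ p h k ξ :=
  Finset.sum_pos (fun S _ => Real.exp_pos _) ⟨fun _ => true, Finset.mem_univ _⟩

lemma abs_spin (b : Bool) : |spin b| = 1 := by cases b <;> simp [spin]

-- the double sum is a square
lemma double_sum_sq {n : ℕ} (a b : Fin n → ℝ) :
    ∑ i, ∑ j, a i * a j * b i * b j = (∑ i, a i * b i) ^ 2 := by
  rw [sq, Finset.sum_mul_sum]
  exact Finset.sum_congr rfl fun i _ => Finset.sum_congr rfl fun j _ => by ring

lemma sum_ab_sq_bound {n : ℕ} (a b : Fin n → Bool) :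
    (∑ i, spin (a i) * spin (b i)) ^ 2 ≤ (n : ℝ) ^ 2 := by
  have h1 : |∑ i, spin (a i) * spin (b i)| ≤ (n : ℝ) := by
    calc |∑ i, spin (a i) * spin (b i)| ≤ ∑ i, |spin (a i) * spin (b i)| :=
          Finset.abs_sum_le_sum_abs _ _
    _ = ∑ _i : Fin n, (1 : ℝ) := by
          refine Finset.sum_congr rfl fun i _ => ?_
          rw [abs_mul, abs_spin, abs_spin, mul_one]
    _ = (n : ℝ) := by simp
  calc (∑ i, spin (a i) * spin (b i)) ^ 2 = |∑ i, spin (a i) * spin (b i)| ^ 2 := (sq_abs _).symm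
  _ ≤ (n : ℝ) ^ 2 := by
      apply pow_le_pow_left₀ (abs_nonneg _) h1

lemma exp_arg_decomp (β σ : ℝ) (p k : ℕ) (h : Fin p → ℝ)
    (ξ : Fin p → Fin (2^(k+1)) → Bool) (S : Fin (2^(k+1)) → Bool) :
    -β * hopH σ p (k+1) S ξ + β * ∑ μ, h μ * ∑ i, spin (ξ μ i) * spin (S i) =
      (-β * hopH σ p k (fun i => S (finLeft i)) (fun μ i => ξ μ (finLeft i)) +
        β * ∑ μ, h μ * ∑ i, spin (ξ μ (finLeft i)) * spin (S (finLeft i))) +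
      (-β * hopH σ p k (fun i => S (finRight i)) (fun μ i => ξ μ (finRight i)) +
        β * ∑ μ, h μ * ∑ i, spin (ξ μ (finRight i)) * spin (S (finRight i))) +
      β * (1 / (2 * (2 : ℝ) ^ (2 * σ * ((k : ℝ) + 1))) *
        ∑ μ, (∑ i, spin (ξ μ i) * spin (S i)) ^ 2) := by
  have hH : hopH σ p (k+1) S ξ =
      hopH σ p k (fun i => S (finLeft i)) (fun μ i => ξ μ (finLeft i)) +
        hopH σ p k (fun i => S (finRight i)) (fun μ i => ξ μ (finRight i)) -
        1 / (2 * (2 : ℝ) ^ (2 * σ * ((k : ℝ) + 1))) *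
          ∑ μ : Fin p, ∑ i : Fin (2 ^ (k + 1)), ∑ j : Fin (2 ^ (k + 1)),
            spin (ξ μ i) * spin (ξ μ j) * spin (S i) * spin (S j) := rfl
  have hsq : ∀ μ : Fin p, ∑ i : Fin (2 ^ (k + 1)), ∑ j : Fin (2 ^ (k + 1)),
      spin (ξ μ i) * spin (ξ μ j) * spin (S i) * spin (S j)
      = (∑ i, spin (ξ μ i) * spin (S i)) ^ 2 := fun μ => double_sum_sq _ _
  have hfld : ∑ μ, h μ * ∑ i, spin (ξ μ i) * spin (S i)
      = ∑ μ, h μ * ∑ i, spin (ξ μ (finLeft i)) * spin (S (finLeft i)) +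
        ∑ μ, h μ * ∑ i, spin (ξ μ (finRight i)) * spin (S (finRight i)) := by
    rw [← Finset.sum_add_distrib]
    refine Finset.sum_congr rfl fun μ _ => ?_
    rw [sum_split (fun j => spin (ξ μ j) * spin (S j)), mul_add]
  rw [hH, Finset.sum_congr rfl (fun μ _ => hsq μ), hfld]
  ring

lemma Z_factor (β σ : ℝ) (p k : ℕ) (h : Fin p → ℝ)
    (ξ : Fin p → Fin (2^(k+1)) → Bool) :
    ∑ S : Fin (2^(k+1)) → Bool,
      Real.exp
        ((-β * hopH σ p k (fun i => S (finLeft i)) (fun μ i => ξ μ (finLeft i)) +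
          β * ∑ μ, h μ * ∑ i, spin (ξ μ (finLeft i)) * spin (S (finLeft i))) +
        (-β * hopH σ p k (fun i => S (finRight i)) (fun μ i => ξ μ (finRight i)) +
          β * ∑ μ, h μ * ∑ i, spin (ξ μ (finRight i)) * spin (S (finRight i))))
      = Zk β σ p h k (fun μ i => ξ μ (finLeft i)) *
        Zk β σ p h k (fun μ i => ξ μ (finRight i)) := by
  rw [Fintype.sum_equiv (pairEquiv k)
    (fun S => Real.exp
        ((-β * hopH σ p k (fun i => S (finLeft i)) (fun μ i => ξ μ (finLeft i)) +
          β * ∑ μ, h μ * ∑ i, spin (ξ μ (finLeft i)) * spin (S (finLeft i))) +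
        (-β * hopH σ p k (fun i => S (finRight i)) (fun μ i => ξ μ (finRight i)) +
          β * ∑ μ, h μ * ∑ i, spin (ξ μ (finRight i)) * spin (S (finRight i)))))
    (fun P => Real.exp
        ((-β * hopH σ p k P.1 (fun μ i => ξ μ (finLeft i)) +
          β * ∑ μ, h μ * ∑ i, spin (ξ μ (finLeft i)) * spin (P.1 i)) +
        (-β * hopH σ p k P.2 (fun μ i => ξ μ (finRight i)) +
          β * ∑ μ, h μ * ∑ i, spin (ξ μ (finRight i)) * spin (P.2 i))))
    (fun S => rfl)]
  rw [Fintype.sum_prod_type]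
  unfold Zk
  rw [Finset.sum_mul_sum]
  exact Finset.sum_congr rfl fun S1 _ => Finset.sum_congr rfl fun S2 _ =>
    Real.exp_add _ _

lemma Z_bounds (β σ : ℝ) (p k : ℕ) (h : Fin p → ℝ) (hβ : 0 < β)
    (ξ : Fin p → Fin (2^(k+1)) → Bool) :
    Zk β σ p h k (fun μ i => ξ μ (finLeft i)) * Zk β σ p h k (fun μ i => ξ μ (finRight i))
      ≤ Zk β σ p h (k+1) ξ ∧
    Zk β σ p h (k+1) ξ ≤
      Real.exp (β * ((p : ℝ) * ((2:ℝ)^(k+1))^2 / (2 * (2:ℝ)^(2*σ*((k:ℝ)+1))))) *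
        (Zk β σ p h k (fun μ i => ξ μ (finLeft i)) *
          Zk β σ p h k (fun μ i => ξ μ (finRight i))) := by
  set c : ℝ := 1 / (2 * (2 : ℝ) ^ (2 * σ * ((k : ℝ) + 1))) with hc
  have hcpos : 0 < c := by
    rw [hc]; positivity
  set C : ℝ := β * ((p : ℝ) * ((2:ℝ)^(k+1))^2 / (2 * (2:ℝ)^(2*σ*((k:ℝ)+1)))) with hC
  have hT : ∀ S : Fin (2^(k+1)) → Bool,
      0 ≤ β * (c * ∑ μ : Fin p, (∑ i, spin (ξ μ i) * spin (S i)) ^ 2) ∧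
      β * (c * ∑ μ : Fin p, (∑ i, spin (ξ μ i) * spin (S i)) ^ 2) ≤ C := by
    intro S
    have hTnn : (0:ℝ) ≤ ∑ μ : Fin p, (∑ i, spin (ξ μ i) * spin (S i)) ^ 2 :=
      Finset.sum_nonneg fun μ _ => sq_nonneg _
    constructor
    · positivity
    · have hTle : ∑ μ : Fin p, (∑ i, spin (ξ μ i) * spin (S i)) ^ 2
          ≤ (p : ℝ) * ((2:ℝ)^(k+1))^2 := by
        calc ∑ μ : Fin p, (∑ i, spin (ξ μ i) * spin (S i)) ^ 2
            ≤ ∑ _μ : Fin p, ((2:ℝ)^(k+1))^2 := by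
              refine Finset.sum_le_sum fun μ _ => ?_
              have := sum_ab_sq_bound (fun i => ξ μ i) S
              rwa [Nat.cast_pow, Nat.cast_ofNat] at this
          _ = (p : ℝ) * ((2:ℝ)^(k+1))^2 := by simp [mul_comm]
      rw [hC]
      have : c * ∑ μ : Fin p, (∑ i, spin (ξ μ i) * spin (S i)) ^ 2
          ≤ c * ((p : ℝ) * ((2:ℝ)^(k+1))^2) :=
        mul_le_mul_of_nonneg_left hTle hcpos.le
      calc β * (c * ∑ μ : Fin p, (∑ i, spin (ξ μ i) * spin (S i)) ^ 2)
          ≤ β * (c * ((p : ℝ) * ((2:ℝ)^(k+1))^2)) :=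
            mul_le_mul_of_nonneg_left this hβ.le
        _ = β * ((p : ℝ) * ((2:ℝ)^(k+1))^2 / (2 * (2:ℝ)^(2*σ*((k:ℝ)+1)))) := by
            rw [hc]; ring
  constructor
  · rw [← Z_factor β σ p k h ξ]
    unfold Zk
    refine Finset.sum_le_sum fun S _ => ?_
    rw [Real.exp_le_exp, exp_arg_decomp]
    have := (hT S).1
    rw [hc] at *
    linarith [(hT S).1]
  · rw [← Z_factor β σ p k h ξ]
    unfold Zk
    rw [Finset.mul_sum]
    refine Finset.sum_le_sum fun S _ => ?_
    rw [← Real.exp_add, Real.exp_le_exp, exp_arg_decomp]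
    have h2 := (hT S).2
    rw [hc] at *
    linarith

lemma log_bounds (β σ : ℝ) (p k : ℕ) (h : Fin p → ℝ) (hβ : 0 < β)
    (ξ : Fin p → Fin (2^(k+1)) → Bool) :
    Real.log (Zk β σ p h k (fun μ i => ξ μ (finLeft i))) +
      Real.log (Zk β σ p h k (fun μ i => ξ μ (finRight i))) ≤
      Real.log (Zk β σ p h (k+1) ξ) ∧
    Real.log (Zk β σ p h (k+1) ξ) ≤
      Real.log (Zk β σ p h k (fun μ i => ξ μ (finLeft i))) +
      Real.log (Zk β σ p h k (fun μ i => ξ μ (finRight i))) +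
      β * ((p : ℝ) * ((2:ℝ)^(k+1))^2 / (2 * (2:ℝ)^(2*σ*((k:ℝ)+1)))) := by
  obtain ⟨h1, h2⟩ := Z_bounds β σ p k h hβ ξ
  have pL := Zk_pos β σ p h k (fun μ i => ξ μ (finLeft i))
  have pR := Zk_pos β σ p h k (fun μ i => ξ μ (finRight i))
  constructor
  · rw [← Real.log_mul pL.ne' pR.ne']
    exact Real.log_le_log (by positivity) h1
  · have h3 := Real.log_le_log (Zk_pos β σ p h (k+1) ξ) h2
    rw [Real.log_mul (Real.exp_pos _).ne' (by positivity), Real.log_exp,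
      Real.log_mul pL.ne' pR.ne'] at h3
    linarith

lemma sum_pair {A : Type*} [Fintype A] (f : A → ℝ) :
    ∑ P : A × A, (f P.1 + f P.2) = 2 * (Fintype.card A : ℝ) * ∑ a, f a := by
  rw [Fintype.sum_prod_type]
  simp only [Finset.sum_add_distrib, Finset.sum_const, Finset.card_univ, nsmul_eq_mul]
  rw [← Finset.mul_sum]
  ring

lemma card_xi (p n : ℕ) : Fintype.card (Fin p → Fin n → Bool) = 2 ^ (p * n) := by
  simp only [Fintype.card_fun, Fintype.card_bool, Fintype.card_fin]
  rw [← pow_mul]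
  congr 1
  ring

lemma const_eq (β σ : ℝ) (p k : ℕ) :
    ((2:ℝ)^(k+1))⁻¹ * (β * ((p:ℝ) * ((2:ℝ)^(k+1))^2 / (2 * (2:ℝ)^(2*σ*((k:ℝ)+1)))))
      = β * p / 2 * (2:ℝ)^(((k:ℝ)+1)*(1-2*σ)) := by
  have ht : ((2:ℝ)^(k+1) : ℝ) = (2:ℝ)^((((k:ℝ)+1)) : ℝ) := by
    rw [← Real.rpow_natCast 2 (k+1)]
    push_cast
    ring_nf
  set t := ((k:ℝ)+1) with htdef
  have h2 : (2:ℝ)^(t*(1-2*σ)) = (2:ℝ)^(t:ℝ) * (2:ℝ)^(t:ℝ) / ((2:ℝ)^(2*σ*t) * (2:ℝ)^(t:ℝ)) := by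
    rw [← Real.rpow_add two_pos, ← Real.rpow_add two_pos, ← Real.rpow_sub two_pos]
    congr 1
    ring
  rw [ht, h2]
  have p1 : (0:ℝ) < (2:ℝ)^(t:ℝ) := Real.rpow_pos_of_pos two_pos t
  have p2 : (0:ℝ) < (2:ℝ)^(2*σ*t) := Real.rpow_pos_of_pos two_pos _
  field_simp


/-- increment bounds for the quenched free energy of the HHM. -/
theorem hopfield_free_energy_increment (k p : ℕ) (hp : 1 ≤ p) (β σ : ℝ) (h : Fin p → ℝ)
    (hβ : 0 < β) (hσ : σ ∈ Set.Ioo (1 / 2 : ℝ) 1) :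
    hopF β σ p h k ≤ hopF β σ p h (k + 1) ∧
      hopF β σ p h (k + 1) ≤
        hopF β σ p h k + β * p / 2 * (2 : ℝ) ^ (((k : ℝ) + 1) * (1 - 2 * σ)) := by
  set L := ∑ ξ : Fin p → Fin (2 ^ k) → Bool, Real.log (Zk β σ p h k ξ) with hL
  set M := ∑ ξ : Fin p → Fin (2 ^ (k+1)) → Bool, Real.log (Zk β σ p h (k+1) ξ) with hM
  set C := β * ((p : ℝ) * ((2:ℝ)^(k+1))^2 / (2 * (2:ℝ)^(2*σ*((k:ℝ)+1)))) with hC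
  have hMsum : ∑ ξ : Fin p → Fin (2^(k+1)) → Bool,
      (Real.log (Zk β σ p h k (fun μ i => ξ μ (finLeft i))) +
       Real.log (Zk β σ p h k (fun μ i => ξ μ (finRight i))))
      = 2 * (2:ℝ)^(p*2^k) * L := by
    have e1 : (∑ ξ : Fin p → Fin (2^(k+1)) → Bool,
        (Real.log (Zk β σ p h k (fun μ i => ξ μ (finLeft i))) +
         Real.log (Zk β σ p h k (fun μ i => ξ μ (finRight i)))))
        = ∑ P : (Fin p → Fin (2^k) → Bool) × (Fin p → Fin (2^k) → Bool),
            (Real.log (Zk β σ p h k P.1) + Real.log (Zk β σ p h k P.2)) :=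
      Fintype.sum_equiv (xiEquiv p k) _ _ (fun ξ => rfl)
    rw [e1, sum_pair (fun ξ => Real.log (Zk β σ p h k ξ)), card_xi]
    push_cast
    rw [hL]
  have hlow : 2 * (2:ℝ)^(p*2^k) * L ≤ M := by
    rw [← hMsum, hM]
    exact Finset.sum_le_sum fun ξ _ => (log_bounds β σ p k h hβ ξ).1
  have hupp : M ≤ 2 * (2:ℝ)^(p*2^k) * L + (2:ℝ)^(p*2^(k+1)) * C := by
    have h1 : M ≤ ∑ ξ : Fin p → Fin (2^(k+1)) → Bool,
        ((Real.log (Zk β σ p h k (fun μ i => ξ μ (finLeft i))) +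
          Real.log (Zk β σ p h k (fun μ i => ξ μ (finRight i)))) + C) := by
      rw [hM]
      exact Finset.sum_le_sum fun ξ _ => by
        have := (log_bounds β σ p k h hβ ξ).2
        rw [← hC] at this
        exact this
    rw [Finset.sum_add_distrib, hMsum, Finset.sum_const, Finset.card_univ, card_xi,
      nsmul_eq_mul] at h1
    push_cast at h1 ⊢
    linarith
  have hXne : ((2:ℝ)^(p*2^k)) ≠ 0 := by positivity
  have hkne : ((2:ℝ)^k) ≠ 0 := by positivity
  have hY : ((2:ℝ)^(p*2^(k+1))) = (2:ℝ)^(p*2^k) * (2:ℝ)^(p*2^k) := by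
    rw [← pow_add]
    congr 1
    rw [pow_succ]
    ring
  have hpow : ((2:ℝ)^(k+1)) = 2 * (2:ℝ)^k := by rw [pow_succ]; ring
  have hFk : hopF β σ p h k = ((2:ℝ)^k)⁻¹ * (((2:ℝ)^(p*2^k))⁻¹ * L) := hopF_eq β σ p h k
  have hFk1 : hopF β σ p h (k+1) = ((2:ℝ)^(k+1))⁻¹ * (((2:ℝ)^(p*2^(k+1)))⁻¹ * M) :=
    hopF_eq β σ p h (k+1)
  have hinv1 : (0:ℝ) ≤ ((2:ℝ)^(k+1))⁻¹ := by positivity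
  have hinv2 : (0:ℝ) ≤ ((2:ℝ)^(p*2^(k+1)))⁻¹ := by positivity
  constructor
  · have key : ((2:ℝ)^(k+1))⁻¹ * (((2:ℝ)^(p*2^(k+1)))⁻¹ * (2 * (2:ℝ)^(p*2^k) * L))
        = ((2:ℝ)^k)⁻¹ * (((2:ℝ)^(p*2^k))⁻¹ * L) := by
      rw [hY, hpow]
      field_simp
    rw [hFk, hFk1, ← key]
    exact mul_le_mul_of_nonneg_left (mul_le_mul_of_nonneg_left hlow hinv2) hinv1
  · have key : ((2:ℝ)^(k+1))⁻¹ * (((2:ℝ)^(p*2^(k+1)))⁻¹ *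
        (2 * (2:ℝ)^(p*2^k) * L + (2:ℝ)^(p*2^(k+1)) * C))
        = ((2:ℝ)^k)⁻¹ * (((2:ℝ)^(p*2^k))⁻¹ * L) + ((2:ℝ)^(k+1))⁻¹ * C := by
      rw [hY, hpow]
      field_simp
    have step : hopF β σ p h (k+1) ≤ ((2:ℝ)^k)⁻¹ * (((2:ℝ)^(p*2^k))⁻¹ * L)
        + ((2:ℝ)^(k+1))⁻¹ * C := by
      rw [hFk1, ← key]
      exact mul_le_mul_of_nonneg_left (mul_le_mul_of_nonneg_left hupp hinv2) hinv1
    rw [hFk]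
    calc hopF β σ p h (k+1)
        ≤ ((2:ℝ)^k)⁻¹ * (((2:ℝ)^(p*2^k))⁻¹ * L) + ((2:ℝ)^(k+1))⁻¹ * C := step
      _ = ((2:ℝ)^k)⁻¹ * (((2:ℝ)^(p*2^k))⁻¹ * L)
          + β * p / 2 * (2 : ℝ) ^ (((k : ℝ) + 1) * (1 - 2 * σ)) := by
          rw [hC, const_eq]
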